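/- arXiv:2006.01736 — 5 statements merged into one kernel-verified Lean document; each statement's English description precedes it below -/
import Mathlib

section
/- Let d be an odd prime and 1 ≤ a ≤ d − 1. On the collection N(a) of finite subsets of ZMod d × ZMod d of cardinality a, the relation A ∼ B iff there exists i ∈ ZMod d × ZMod d with B = A + i is an equivalence relation; every equivalence class has exactly d² elements, and the number of equivalence classes is C(d², a) / d². -/
open Finset

private lemma tec_translate_inj (d a : ℕ) [Fact d.Prime] (ha : (a : ZMod d) ≠ 0)
    {A : Finset (ZMod d × ZMod d)} (hA : A.card = a) :
    Function.Injective (fun i : ZMod d × ZMod d => A.image (· + i)) := by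
  intro i j h
  simp only at h
  have e1 : ∑ x ∈ A.image (· + i), x = ∑ x ∈ A, (x + i) :=
    Finset.sum_image (fun x _ y _ hxy => by simpa using hxy)
  have e2 : ∑ x ∈ A.image (· + j), x = ∑ x ∈ A, (x + j) :=
    Finset.sum_image (fun x _ y _ hxy => by simpa using hxy)
  have hsum : ∑ x ∈ A, (x + i) = ∑ x ∈ A, (x + j) := by rw [← e1, ← e2, h]
  have hc : A.card • i = A.card • j := by
    simpa [Finset.sum_add_distrib, Finset.sum_const] using hsum
  rw [hA] at hc
  have hz : a • (i - j) = 0 := by rw [smul_sub, hc, sub_self]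
  have hz1 : (a : ZMod d) * (i - j).1 = 0 := by
    have := congrArg Prod.fst hz; simpa [nsmul_eq_mul] using this
  have hz2 : (a : ZMod d) * (i - j).2 = 0 := by
    have := congrArg Prod.snd hz; simpa [nsmul_eq_mul] using this
  have h1 : (i - j).1 = 0 := (mul_eq_zero.mp hz1).resolve_left ha
  have h2 : (i - j).2 = 0 := (mul_eq_zero.mp hz2).resolve_left ha
  exact sub_eq_zero.mp (Prod.ext h1 h2)

private lemma tec_translate_comp {d : ℕ} (A : Finset (ZMod d × ZMod d))
    (i j : ZMod d × ZMod d) :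
    (A.image (· + i)).image (· + j) = A.image (· + (i + j)) := by
  rw [Finset.image_image]; apply Finset.image_congr; intro x _
  simp [Function.comp, add_assoc]

private lemma tec_translate_card {d : ℕ} (A : Finset (ZMod d × ZMod d))
    (i : ZMod d × ZMod d) :
    (A.image (· + i)).card = A.card :=
  Finset.card_image_of_injective _ (add_left_injective i)

/-- For an odd prime `d` and `1 ≤ a ≤ d - 1`, translation is an equivalence
relation on the subsets of the phase space of cardinality `a`; every equivalence class has
exactly `d ^ 2` elements, and the number of equivalence classes is `C(d², a) / d²`. -/
theorem translation_equivalence_classes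
    (d a : ℕ) [Fact d.Prime] (hodd : Odd d) (h1 : 1 ≤ a) (h2 : a ≤ d - 1) :
    Equivalence (fun A B : Finset (ZMod d × ZMod d) =>
        ∃ i : ZMod d × ZMod d, B = A.image (· + i)) ∧
    (∀ A : Finset (ZMod d × ZMod d), A.card = a →
      (Finset.univ.filter (fun B : Finset (ZMod d × ZMod d) =>
          B.card = a ∧ ∃ i : ZMod d × ZMod d, B = A.image (· + i))).card = d ^ 2) ∧
    ((Finset.univ.filter (fun A : Finset (ZMod d × ZMod d) => A.card = a)).image
        (fun A => Finset.univ.filter (fun B : Finset (ZMod d × ZMod d) =>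
          ∃ i : ZMod d × ZMod d, B = A.image (· + i)))).card
      = Nat.choose (d ^ 2) a / d ^ 2 := by
  classical
  have hd : d.Prime := Fact.out
  have hd2 : 2 ≤ d := hd.two_le
  have halt : a < d := lt_of_le_of_lt h2 (Nat.sub_lt (by omega) one_pos)
  have ha : (a : ZMod d) ≠ 0 := by
    simp only [Ne, ZMod.natCast_eq_zero_iff]
    intro hdvd
    have := Nat.le_of_dvd (by omega) hdvd
    omega
  have hcard : Fintype.card (ZMod d × ZMod d) = d ^ 2 := by
    simp [ZMod.card, sq]
  refine ⟨⟨?_, ?_, ?_⟩, ?_, ?_⟩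
  · intro A; exact ⟨0, by simp⟩
  · rintro A B ⟨i, rfl⟩
    exact ⟨-i, by rw [tec_translate_comp]; simp⟩
  · rintro A B C ⟨i, rfl⟩ ⟨j, hj⟩
    exact ⟨i + j, by rw [hj, tec_translate_comp]⟩
  · intro A hA
    have hfe : (Finset.univ.filter (fun B : Finset (ZMod d × ZMod d) =>
          B.card = a ∧ ∃ i : ZMod d × ZMod d, B = A.image (· + i)))
        = Finset.univ.image (fun i : ZMod d × ZMod d => A.image (· + i)) := by
      ext B
      simp only [mem_filter, mem_univ, true_and, mem_image]
      constructor
      · rintro ⟨-, i, rfl⟩; exact ⟨i, rfl⟩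
      · rintro ⟨i, rfl⟩
        exact ⟨by rw [tec_translate_card, hA], i, rfl⟩
    rw [hfe, Finset.card_image_of_injective _ (tec_translate_inj d a ha hA),
      card_univ, hcard]
  · set T := Finset.univ.filter (fun A : Finset (ZMod d × ZMod d) => A.card = a) with hT
    set f := fun A : Finset (ZMod d × ZMod d) =>
      Finset.univ.filter (fun B : Finset (ZMod d × ZMod d) =>
        ∃ i : ZMod d × ZMod d, B = A.image (· + i)) with hf
    have hmemT : ∀ A : Finset (ZMod d × ZMod d), A ∈ T ↔ A.card = a := by
      intro A; simp [hT]
    have hclasscard : ∀ A ∈ T, (f A).card = d ^ 2 := by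
      intro A hA
      have hAa : A.card = a := (hmemT A).mp hA
      have hfe : f A = Finset.univ.image (fun i : ZMod d × ZMod d => A.image (· + i)) := by
        ext B
        simp only [hf, mem_filter, mem_univ, true_and, mem_image]
        constructor
        · rintro ⟨i, rfl⟩; exact ⟨i, rfl⟩
        · rintro ⟨i, rfl⟩; exact ⟨i, rfl⟩
      rw [hfe, Finset.card_image_of_injective _ (tec_translate_inj d a ha hAa),
        card_univ, hcard]
    have hwd : ∀ (A : Finset (ZMod d × ZMod d)) (i : ZMod d × ZMod d),
        f (A.image (· + i)) = f A := by
      intro A i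
      ext B
      simp only [hf, mem_filter, mem_univ, true_and]
      constructor
      · rintro ⟨j, rfl⟩
        exact ⟨i + j, by rw [tec_translate_comp]⟩
      · rintro ⟨j, rfl⟩
        refine ⟨j - i, ?_⟩
        rw [tec_translate_comp]
        congr 1
        funext x
        ring
    have hI : (T.image f).biUnion id = T := by
      ext B
      simp only [mem_biUnion, mem_image, id]
      constructor
      · rintro ⟨C, ⟨A, hAT, rfl⟩, hB⟩
        simp only [hf, mem_filter, mem_univ, true_and] at hB
        obtain ⟨i, rfl⟩ := hB
        rw [hmemT] at hAT ⊢
        rw [tec_translate_card, hAT]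
      · intro hB
        refine ⟨f B, ⟨B, hB, rfl⟩, ?_⟩
        simp only [hf, mem_filter, mem_univ, true_and]
        exact ⟨0, by simp⟩
    have hdisj : ∀ C1 ∈ T.image f, ∀ C2 ∈ T.image f, C1 ≠ C2 → Disjoint C1 C2 := by
      intro C1 hC1 C2 hC2 hne
      obtain ⟨A1, hA1, rfl⟩ := mem_image.mp hC1
      obtain ⟨A2, hA2, rfl⟩ := mem_image.mp hC2
      rw [Finset.disjoint_left]
      intro B hB1 hB2
      apply hne
      simp only [hf, mem_filter, mem_univ, true_and] at hB1 hB2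
      obtain ⟨i, hi⟩ := hB1
      obtain ⟨j, hj⟩ := hB2
      rw [← hwd A1 i, ← hi, hj, hwd A2 j]
    have hTcard : T.card = (d ^ 2).choose a := by
      have hTp : T = Finset.univ.powersetCard a := by
        ext B; simp [hT, Finset.mem_powersetCard_univ]
      rw [hTp, Finset.card_powersetCard, card_univ, hcard]
    have hbi : ((T.image f).biUnion id).card = ∑ C ∈ T.image f, (id C).card :=
      Finset.card_biUnion hdisj
    have hsum : ∑ C ∈ T.image f, (id C).card = (T.image f).card * d ^ 2 := by
      rw [Finset.sum_congr rfl (fun C hC => ?_), Finset.sum_const, smul_eq_mul]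
      obtain ⟨A, hA, rfl⟩ := mem_image.mp hC
      exact hclasscard A hA
    have hkey : (d ^ 2).choose a = (T.image f).card * d ^ 2 := by
      rw [← hTcard, ← hsum, ← hbi, hI]
    rw [hkey, Nat.mul_div_cancel _ (pow_pos (by omega) 2)]
end

section
/- Let s be a nonzero vector in ℂ^d. Then the d² coherent states D(i)s, i ∈ ZMod d × ZMod d, span all of ℂ^d. -/
open scoped Matrix ComplexOrder

noncomputable section

/-- `ω(r) = exp(2πi r / d)` for `r ∈ ZMod d`. -/
def omg (d : ℕ) (r : ZMod d) : ℂ := Complex.exp (2 * Real.pi * Complex.I * r.val / d)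

/-- The matrix `Z` with `Z|m⟩ = ω(m)|m⟩`. -/
def Zmat (d : ℕ) [Fact d.Prime] : Matrix (ZMod d) (ZMod d) ℂ :=
  Matrix.diagonal fun m => omg d m

/-- The matrix `X` with `X|m⟩ = |m+1⟩`. -/
def Xmat (d : ℕ) [Fact d.Prime] : Matrix (ZMod d) (ZMod d) ℂ :=
  Matrix.of fun m n => if m = n + 1 then 1 else 0

/-- The displacement operator `D(α,β) = ω(-2⁻¹αβ) Z^α X^β` as a matrix. -/
def Dmat (d : ℕ) [Fact d.Prime] (i : ZMod d × ZMod d) : Matrix (ZMod d) (ZMod d) ℂ :=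
  omg d (-(2⁻¹ * i.1 * i.2)) • (Zmat d ^ (i.1).val * Xmat d ^ (i.2).val)

/-- The displacement operator `D(i)` as a linear endomorphism of `ℂ^d`. -/
def Dlin (d : ℕ) [Fact d.Prime] (i : ZMod d × ZMod d) :
    EuclideanSpace ℂ (ZMod d) →ₗ[ℂ] EuclideanSpace ℂ (ZMod d) :=
  Matrix.toEuclideanLin (Dmat d i)

/-- The coherent subspace `H(A)`: the span of the coherent states `D(j)s`, `j ∈ A`. -/
def Hsub (d : ℕ) [Fact d.Prime] (s : EuclideanSpace ℂ (ZMod d))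
    (A : Finset (ZMod d × ZMod d)) : Submodule ℂ (EuclideanSpace ℂ (ZMod d)) :=
  Submodule.span ℂ ((fun j => Dlin d j s) '' ↑A)

/-- The coherent projector `Π(A)`: the orthogonal projection of `ℂ^d` onto `H(A)`,
as a linear endomorphism of `ℂ^d`. -/
def Proj (d : ℕ) [Fact d.Prime] (s : EuclideanSpace ℂ (ZMod d))
    (A : Finset (ZMod d × ZMod d)) :
    EuclideanSpace ℂ (ZMod d) →ₗ[ℂ] EuclideanSpace ℂ (ZMod d) :=
  (Hsub d s A).subtype ∘ₗ (Submodule.orthogonalProjectionOnto (Hsub d s A)).toLinearMap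

/-! ### Auxiliary lemmas -/

/-- `e(n) = exp(2πi n / d)` for integers `n`. -/
private def ee (d : ℕ) (n : ℤ) : ℂ := Complex.exp (2 * Real.pi * Complex.I * n / d)

private lemma ee_add (d : ℕ) (m n : ℤ) : ee d (m + n) = ee d m * ee d n := by
  rw [ee, ee, ee, ← Complex.exp_add]
  congr 1
  push_cast
  ring

private lemma ee_pow (d : ℕ) (m : ℤ) (k : ℕ) : ee d m ^ k = ee d (k * m) := by
  rw [ee, ee, ← Complex.exp_nat_mul]
  congr 1
  push_cast
  ring

private lemma ee_dvd_mul (d : ℕ) (hd : d ≠ 0) (t : ℤ) : ee d (d * t) = 1 := by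
  have hd' : (d : ℂ) ≠ 0 := Nat.cast_ne_zero.mpr hd
  rw [ee]
  have h : 2 * (Real.pi : ℂ) * Complex.I * ((((d : ℤ) * t : ℤ)) : ℂ) / d
      = t * (2 * Real.pi * Complex.I) := by
    push_cast
    field_simp
  rw [h, Complex.exp_int_mul_two_pi_mul_I]

private lemma ee_congr {d : ℕ} (hd : d ≠ 0) {m n : ℤ} (h : (m : ZMod d) = n) :
    ee d m = ee d n := by
  obtain ⟨t, ht⟩ : (d : ℤ) ∣ m - n := by
    rwa [← ZMod.intCast_zmod_eq_zero_iff_dvd, Int.cast_sub, sub_eq_zero]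
  have hm : m = n + d * t := by linarith
  rw [hm, ee_add, ee_dvd_mul d hd, mul_one]

private lemma omg_eq_ee (d : ℕ) (r : ZMod d) : omg d r = ee d r.val := by
  rw [omg, ee]
  norm_cast

private lemma omg_ne_zero (d : ℕ) (r : ZMod d) : omg d r ≠ 0 := by
  rw [omg]; exact Complex.exp_ne_zero _

private lemma natCast_val_eq {d : ℕ} [NeZero d] (a : ZMod d) :
    ((a.val : ℤ) : ZMod d) = a := by
  push_cast
  simp [ZMod.natCast_val, ZMod.cast_id]

private lemma omg_add (d : ℕ) [NeZero d] (a b : ZMod d) :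
    omg d (a + b) = omg d a * omg d b := by
  rw [omg_eq_ee, omg_eq_ee, omg_eq_ee, ← ee_add]
  refine ee_congr (NeZero.ne d) ?_
  push_cast
  simp [ZMod.natCast_val, ZMod.cast_id]

private lemma omg_pow (d : ℕ) [NeZero d] (r : ZMod d) (k : ℕ) :
    omg d r ^ k = omg d ((k : ZMod d) * r) := by
  rw [omg_eq_ee, ee_pow, omg_eq_ee]
  refine (ee_congr (NeZero.ne d) ?_).symm
  push_cast
  simp [ZMod.natCast_val, ZMod.cast_id]

private lemma omg_sum_eq_zero (d : ℕ) [NeZero d] (c : ZMod d) (hc : c ≠ 0) :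
    ∑ α : ZMod d, omg d (α * c) = 0 := by
  have hd : d ≠ 0 := NeZero.ne d
  set ζ : ℂ := omg d c with hζ
  have key : ∀ α : ZMod d, omg d (α * c) = ζ ^ α.val := by
    intro α
    rw [hζ, omg_pow d c α.val]
    congr 1
    simp [ZMod.natCast_val, ZMod.cast_id]
  simp_rw [key]
  have hbij : ∑ α : ZMod d, ζ ^ α.val = ∑ k ∈ Finset.range d, ζ ^ k := by
    refine Finset.sum_nbij' (fun α => α.val) (fun k => (k : ZMod d)) ?_ ?_ ?_ ?_ ?_
    · intro a _; exact Finset.mem_range.mpr (ZMod.val_lt a)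
    · intro a _; exact Finset.mem_univ _
    · intro a _; exact ZMod.natCast_rightInverse a
    · intro a ha; exact ZMod.val_cast_of_lt (Finset.mem_range.mp ha)
    · intro a _; rfl
  rw [hbij]
  have hζd : ζ ^ d = 1 := by
    rw [hζ, omg_pow d c d]
    have h0 : ((d : ZMod d) * c) = 0 := by simp
    rw [h0, omg]
    simp
  have hζ1 : ζ ≠ 1 := by
    intro h
    rw [hζ, omg, Complex.exp_eq_one_iff] at h
    obtain ⟨k, hk⟩ := h
    have hd' : (d : ℂ) ≠ 0 := Nat.cast_ne_zero.mpr hd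
    have h2πI : (2 : ℂ) * Real.pi * Complex.I ≠ 0 := by
      simp [Real.pi_ne_zero, Complex.I_ne_zero, Complex.ofReal_ne_zero]
    have hval : ((c.val : ℂ)) = k * d := by
      rw [div_eq_iff hd'] at hk
      have h4 : (2 : ℂ) * Real.pi * Complex.I * (c.val : ℂ)
          = (2 : ℂ) * Real.pi * Complex.I * ((k : ℂ) * d) := by
        rw [hk]; ring
      exact mul_left_cancel₀ h2πI h4
    have hvalZ : (c.val : ℤ) = k * d := by exact_mod_cast hval
    have hdvd : d ∣ c.val := by
      have hdz : (d : ℤ) ∣ (c.val : ℤ) := Dvd.intro k (by linarith)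
      exact_mod_cast hdz
    have hv0 : c.val = 0 := Nat.eq_zero_of_dvd_of_lt hdvd (ZMod.val_lt c)
    exact hc ((ZMod.val_eq_zero c).mp hv0)
  rw [geom_sum_eq hζ1, hζd]
  simp

private lemma omg_sum (d : ℕ) [NeZero d] (c : ZMod d) :
    ∑ α : ZMod d, omg d (α * c) = if c = 0 then (d : ℂ) else 0 := by
  split_ifs with h
  · subst h
    simp only [mul_zero]
    rw [Finset.sum_const]
    simp [omg, ZMod.card]
  · exact omg_sum_eq_zero d c h

private lemma Xpow (d : ℕ) [Fact d.Prime] (b : ℕ) :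
    Xmat d ^ b = Matrix.of (fun k l => if k = l + (b : ZMod d) then 1 else 0) := by
  induction b with
  | zero =>
    ext k l
    simp [Matrix.one_apply, eq_comm]
  | succ b ih =>
    ext k l
    rw [pow_succ, ih]
    simp only [Matrix.mul_apply, Matrix.of_apply, Xmat, ite_mul, one_mul, zero_mul,
      mul_ite, mul_one, mul_zero]
    rw [Finset.sum_ite_eq' Finset.univ (l + 1) (fun j => if k = j + (b : ZMod d) then 1 else 0)]
    have harith : l + 1 + (b : ZMod d) = l + ((b + 1 : ℕ) : ZMod d) := by
      push_cast; ring
    simp [harith]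

private lemma P_apply (d : ℕ) [Fact d.Prime] [NeZero d] (α β : ZMod d) (k l : ZMod d) :
    (Zmat d ^ α.val * Xmat d ^ β.val) k l = if k = l + β then omg d (α * k) else 0 := by
  rw [Zmat, Matrix.diagonal_pow, Xpow]
  rw [Matrix.diagonal_mul]
  have hβ : ((β.val : ℕ) : ZMod d) = β := ZMod.natCast_rightInverse β
  have hα : omg d k ^ α.val = omg d (α * k) := by
    rw [omg_pow]
    congr 1
    simp [ZMod.natCast_val, ZMod.cast_id]
  simp only [Matrix.of_apply, Pi.pow_apply]
  rw [hβ, hα, mul_ite, mul_one, mul_zero]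

private lemma key_sum (d : ℕ) [Fact d.Prime] [NeZero d] (m n : ZMod d) :
    ∑ α : ZMod d, omg d (-(α * m)) • (Zmat d ^ α.val * Xmat d ^ (m - n).val)
      = (d : ℂ) • Matrix.single m n 1 := by
  ext k l
  rw [Matrix.sum_apply]
  simp_rw [Matrix.smul_apply, P_apply, smul_eq_mul, mul_ite, mul_zero]
  have hmul : ∀ α : ZMod d, omg d (-(α * m)) * omg d (α * k) = omg d (α * (k - m)) := by
    intro α
    rw [← omg_add]
    congr 1
    ring
  by_cases hkl : k = l + (m - n)
  · simp_rw [if_pos hkl, hmul]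
    rw [omg_sum]
    by_cases hkm : k = m
    · have hln : n = l := by linear_combination hkl - hkm
      have hkm0 : k - m = 0 := by rw [hkm, sub_self]
      rw [if_pos hkm0]
      simp [Matrix.single, Matrix.smul_apply, hkm.symm, hln, smul_eq_mul]
    · have hkm0 : k - m ≠ 0 := sub_ne_zero.mpr hkm
      rw [if_neg hkm0]
      have hne : ¬(m = k ∧ n = l) := fun h => hkm h.1.symm
      simp [Matrix.single, Matrix.smul_apply, hne, smul_eq_mul]
  · simp only [if_neg hkl, Finset.sum_const_zero]
    have : ¬(m = k ∧ n = l) := by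
      rintro ⟨h1, h2⟩
      apply hkl
      rw [← h1, ← h2]
      ring
    simp [Matrix.single, Matrix.smul_apply, this, smul_eq_mul]

private lemma span_Dmat (d : ℕ) [Fact d.Prime] :
    Submodule.span ℂ (Set.range (Dmat d)) = ⊤ := by
  haveI : NeZero d := ⟨(Fact.out : d.Prime).pos.ne'⟩
  rw [eq_top_iff]
  intro M _
  rw [Matrix.matrix_eq_sum_single M]
  apply Submodule.sum_mem
  intro m _
  apply Submodule.sum_mem
  intro n _
  have hsm : Matrix.single m n (M m n) = M m n • Matrix.single m n 1 := by
    simp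
  rw [hsm]
  apply Submodule.smul_mem
  have hd : (d : ℂ) ≠ 0 := Nat.cast_ne_zero.mpr (NeZero.ne d)
  have h1 : Matrix.single m n (1 : ℂ)
      = (d : ℂ)⁻¹ • ∑ α : ZMod d, omg d (-(α * m)) • (Zmat d ^ α.val * Xmat d ^ (m - n).val) := by
    rw [key_sum, smul_smul, inv_mul_cancel₀ hd, one_smul]
  rw [h1]
  apply Submodule.smul_mem
  apply Submodule.sum_mem
  intro α _
  apply Submodule.smul_mem
  have h2 : (Zmat d ^ α.val * Xmat d ^ (m - n).val)
      = (omg d (-(2⁻¹ * α * (m - n))))⁻¹ • Dmat d (α, m - n) := by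
    rw [Dmat, smul_smul, inv_mul_cancel₀ (omg_ne_zero d _), one_smul]
  rw [h2]
  exact Submodule.smul_mem _ _ (Submodule.subset_span ⟨(α, m - n), rfl⟩)

/-- For every nonzero vector `s` in `ℂ^d`, the `d²` coherent states `D(i)s`,
`i ∈ ZMod d × ZMod d`, span all of `ℂ^d`. -/
theorem coherent_states_span_top
    (d : ℕ) [Fact d.Prime] (hodd : Odd d)
    (s : EuclideanSpace ℂ (ZMod d)) (hs : s ≠ 0) :
    Submodule.span ℂ (Set.range fun i : ZMod d × ZMod d => Dlin d i s) = ⊤ := by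
  haveI : NeZero d := ⟨(Fact.out : d.Prime).pos.ne'⟩
  set S := Submodule.span ℂ (Set.range fun i : ZMod d × ZMod d => Dlin d i s) with hS
  let L : Matrix (ZMod d) (ZMod d) ℂ →ₗ[ℂ] EuclideanSpace ℂ (ZMod d) :=
    { toFun := fun M => Matrix.toEuclideanLin M s
      map_add' := fun A B => by simp [map_add]
      map_smul' := fun c A => by simp }
  have hrange : ∀ M : Matrix (ZMod d) (ZMod d) ℂ, Matrix.toEuclideanLin M s ∈ S := by
    intro M
    have h1 : (Set.range fun i : ZMod d × ZMod d => Dlin d i s) = L '' Set.range (Dmat d) := by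
      rw [← Set.range_comp]
      rfl
    rw [hS, h1, ← Submodule.map_span, span_Dmat, Submodule.map_top]
    exact LinearMap.mem_range.mpr ⟨M, rfl⟩
  obtain ⟨n, hn⟩ : ∃ n, s n ≠ 0 := by
    by_contra h
    push_neg at h
    exact hs (by ext k; exact h k)
  have hE : ∀ m : ZMod d,
      Matrix.toEuclideanLin (Matrix.single m n (1 : ℂ)) s
        = s n • EuclideanSpace.single m 1 := by
    intro m
    ext k
    rw [Matrix.toEuclideanLin_apply]
    simp only [Matrix.mulVec, dotProduct,
      Matrix.single, Matrix.of_apply, PiLp.smul_apply, smul_eq_mul,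
      EuclideanSpace.single_apply, ite_mul, one_mul, zero_mul]
    by_cases hmk : m = k
    · subst hmk
      simp [Finset.sum_ite_eq, mul_comm]
    · have : ∀ j, ¬(m = k ∧ n = j) := fun j h => hmk h.1
      simp [this, Ne.symm hmk]
  have hsingle : ∀ m : ZMod d, EuclideanSpace.single m (1 : ℂ) ∈ S := by
    intro m
    have h1 := hrange (Matrix.single m n 1)
    rw [hE m] at h1
    have h2 := Submodule.smul_mem S (s n)⁻¹ h1
    rwa [smul_smul, inv_mul_cancel₀ hn, one_smul] at h2
  rw [eq_top_iff, ← (EuclideanSpace.basisFun (ZMod d) ℂ).toBasis.span_eq]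
  refine Submodule.span_le.mpr ?_
  rintro _ ⟨m, rfl⟩
  simpa [EuclideanSpace.basisFun_apply] using hsingle m

end
end

section
/- Let A ⊆ B be finite subsets of ZMod d × ZMod d (so the covering by the equivalence class of A is finer than that of B), and let ρ be a density matrix on ℂ^d (positive semidefinite with trace 1). Then for every 1 ≤ ℓ ≤ d², the minimum over all ℓ-element subsets S of ZMod d × ZMod d of ∑_{i∈S} Tr(ρ · Π(A + i)) is less than or equal to the minimum over all ℓ-element subsets S of ∑_{i∈S} Tr(ρ · Π(B + i)). Equivalently, with card A = a and card B = b, the Lorenz values satisfy a · L_A(ℓ; ρ) ≤ b · L_B(ℓ; ρ). -/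
open scoped Matrix ComplexOrder

noncomputable section

/-- The coherent projector `Π(A)` as a `d × d` matrix. -/
def PmatM (d : ℕ) [Fact d.Prime] (s : EuclideanSpace ℂ (ZMod d))
    (A : Finset (ZMod d × ZMod d)) : Matrix (ZMod d) (ZMod d) ℂ :=
  Matrix.toEuclideanLin.symm (Proj d s A)

/-- The `Q` function of a matrix `ρ`: `Q(A + i; ρ) = Tr(ρ · Π(A + i))` (a real number). -/
def trQ (d : ℕ) [Fact d.Prime] (s : EuclideanSpace ℂ (ZMod d))
    (A : Finset (ZMod d × ZMod d)) (ρ : Matrix (ZMod d) (ZMod d) ℂ)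
    (i : ZMod d × ZMod d) : ℝ :=
  ((ρ * PmatM d s (A.image (· + i))).trace).re

/-- The unnormalized Lorenz value `Λ(ℓ; ρ)`: the minimum, over all `ℓ`-element subsets `S`
of `ZMod d × ZMod d`, of `∑_{i ∈ S} Tr(ρ · Π(A + i))`. -/
def LorMin (d : ℕ) [Fact d.Prime] (s : EuclideanSpace ℂ (ZMod d))
    (A : Finset (ZMod d × ZMod d)) (ρ : Matrix (ZMod d) (ZMod d) ℂ) (ℓ : ℕ) : ℝ :=
  sInf {x : ℝ | ∃ S : Finset (ZMod d × ZMod d), S.card = ℓ ∧ x = ∑ i ∈ S, trQ d s A ρ i}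

lemma toEuclideanLin_PmatM (d : ℕ) [Fact d.Prime] (s : EuclideanSpace ℂ (ZMod d))
    (A : Finset (ZMod d × ZMod d)) :
    Matrix.toEuclideanLin (PmatM d s A) = Proj d s A := by
  simp [PmatM]

lemma toEuclideanLin_mul {n : Type*} [Fintype n] [DecidableEq n]
    (M N : Matrix n n ℂ) :
    Matrix.toEuclideanLin (M * N) =
      (Matrix.toEuclideanLin M) ∘ₗ (Matrix.toEuclideanLin N) := by
  rw [Matrix.toEuclideanLin_eq_toLin, Matrix.toLin_mul _ (PiLp.basisFun 2 ℂ n) _]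

lemma Proj_isSymmetric (d : ℕ) [Fact d.Prime] (s : EuclideanSpace ℂ (ZMod d))
    (A : Finset (ZMod d × ZMod d)) : (Proj d s A).IsSymmetric := by
  intro x y
  exact Submodule.inner_starProjection_left_eq_right (Hsub d s A) x y

lemma PmatM_conjTranspose (d : ℕ) [Fact d.Prime] (s : EuclideanSpace ℂ (ZMod d))
    (A : Finset (ZMod d × ZMod d)) : (PmatM d s A)ᴴ = PmatM d s A := by
  apply Matrix.toEuclideanLin.injective
  rw [Matrix.toEuclideanLin_conjTranspose_eq_adjoint, toEuclideanLin_PmatM]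
  have h := (LinearMap.isSymmetric_iff_isSelfAdjoint _).mp (Proj_isSymmetric d s A)
  rw [← LinearMap.star_eq_adjoint]
  exact h

lemma PmatM_mul_of_le (d : ℕ) [Fact d.Prime] (s : EuclideanSpace ℂ (ZMod d))
    (A B : Finset (ZMod d × ZMod d)) (h : Hsub d s A ≤ Hsub d s B) :
    PmatM d s B * PmatM d s A = PmatM d s A := by
  apply Matrix.toEuclideanLin.injective
  rw [toEuclideanLin_mul, toEuclideanLin_PmatM, toEuclideanLin_PmatM]
  refine LinearMap.ext fun x => ?_
  have hmem : Proj d s A x ∈ Hsub d s B := by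
    refine h ?_
    exact ((Submodule.orthogonalProjectionOnto (Hsub d s A)) x).2
  rw [LinearMap.comp_apply]
  exact Submodule.starProjection_eq_self_iff.mpr hmem

lemma PmatM_mul_of_le' (d : ℕ) [Fact d.Prime] (s : EuclideanSpace ℂ (ZMod d))
    (A B : Finset (ZMod d × ZMod d)) (h : Hsub d s A ≤ Hsub d s B) :
    PmatM d s A * PmatM d s B = PmatM d s A := by
  have := congrArg Matrix.conjTranspose (PmatM_mul_of_le d s A B h)
  simpa [Matrix.conjTranspose_mul, PmatM_conjTranspose] using this

lemma trace_re_nonneg_of_posSemidef {n : Type*} [Fintype n] [DecidableEq n]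
    {M : Matrix n n ℂ} (hM : M.PosSemidef) : 0 ≤ M.trace.re := by
  have h : ∀ i, 0 ≤ (M i i).re := by
    intro i
    have h0 := hM.dotProduct_mulVec_nonneg (Pi.single i 1)
    have h1 : (star (Pi.single i 1) ⬝ᵥ M.mulVec (Pi.single i 1) : ℂ) = M i i := by
      simp [Matrix.mulVec_single, dotProduct, Pi.single_apply,
        apply_ite (star : ℂ → ℂ), Finset.sum_ite_eq']
    rw [h1] at h0
    exact (Complex.le_def.mp h0).1
  rw [Matrix.trace, Complex.re_sum]
  exact Finset.sum_nonneg fun i _ => h i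

lemma trace_re_nonneg_of_proj {n : Type*} [Fintype n] [DecidableEq n]
    {ρ P : Matrix n n ℂ} (hρ : ρ.PosSemidef) (hP : Pᴴ = P) (hPP : P * P = P) :
    0 ≤ (ρ * P).trace.re := by
  have key : (P * ρ * Pᴴ).trace = (ρ * P).trace := by
    rw [Matrix.trace_mul_cycle, hP, hPP, Matrix.trace_mul_comm]
  rw [← key]
  exact trace_re_nonneg_of_posSemidef (hρ.mul_mul_conjTranspose_same P)

lemma trQ_nonneg (d : ℕ) [Fact d.Prime] (s : EuclideanSpace ℂ (ZMod d))
    (A : Finset (ZMod d × ZMod d)) {ρ : Matrix (ZMod d) (ZMod d) ℂ}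
    (hρ : ρ.PosSemidef) (i : ZMod d × ZMod d) : 0 ≤ trQ d s A ρ i :=
  trace_re_nonneg_of_proj hρ (PmatM_conjTranspose d s _)
    (PmatM_mul_of_le d s _ _ le_rfl)

lemma trQ_mono (d : ℕ) [Fact d.Prime] (s : EuclideanSpace ℂ (ZMod d))
    {A B : Finset (ZMod d × ZMod d)} (hAB : A ⊆ B)
    {ρ : Matrix (ZMod d) (ZMod d) ℂ} (hρ : ρ.PosSemidef) (i : ZMod d × ZMod d) :
    trQ d s A ρ i ≤ trQ d s B ρ i := by
  set A' := A.image (· + i)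
  set B' := B.image (· + i)
  have hsub : Hsub d s A' ≤ Hsub d s B' :=
    Submodule.span_mono (Set.image_mono (Finset.coe_subset.mpr
      (Finset.image_subset_image hAB)))
  set P := PmatM d s A'
  set Q := PmatM d s B'
  have hPc : Pᴴ = P := PmatM_conjTranspose d s A'
  have hQc : Qᴴ = Q := PmatM_conjTranspose d s B'
  have hQP : Q * P = P := PmatM_mul_of_le d s A' B' hsub
  have hPQ : P * Q = P := PmatM_mul_of_le' d s A' B' hsub
  have hPP : P * P = P := PmatM_mul_of_le d s A' A' le_rfl
  have hQQ : Q * Q = Q := PmatM_mul_of_le d s B' B' le_rfl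
  have hRc : (Q - P)ᴴ = Q - P := by rw [Matrix.conjTranspose_sub, hPc, hQc]
  have hRR : (Q - P) * (Q - P) = Q - P := by
    rw [Matrix.sub_mul, Matrix.mul_sub, Matrix.mul_sub, hQP, hPQ, hPP, hQQ]
    abel
  have hkey : 0 ≤ (ρ * (Q - P)).trace.re := trace_re_nonneg_of_proj hρ hRc hRR
  have hsplit : (ρ * (Q - P)).trace = (ρ * Q).trace - (ρ * P).trace := by
    rw [Matrix.mul_sub, Matrix.trace_sub]
  rw [hsplit, Complex.sub_re] at hkey
  unfold trQ
  linarith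

/-- If `A ⊆ B` (the covering by the class of `A` is finer than that of `B`)
and `ρ` is a density matrix, then for every `1 ≤ ℓ ≤ d²` the minimum over `ℓ`-element
subsets `S` of `∑_{i∈S} Tr(ρ · Π(A + i))` is at most the corresponding minimum for `B`;
equivalently `a · L_A(ℓ; ρ) ≤ b · L_B(ℓ; ρ)`. -/
theorem lorenz_min_mono_of_finer
    (d : ℕ) [Fact d.Prime] (hodd : Odd d)
    (s : EuclideanSpace ℂ (ZMod d))
    (A B : Finset (ZMod d × ZMod d)) (hAB : A ⊆ B)
    (ρ : Matrix (ZMod d) (ZMod d) ℂ) (hρ : ρ.PosSemidef) (hρtr : ρ.trace = 1)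
    (ℓ : ℕ) (hℓ1 : 1 ≤ ℓ) (hℓ2 : ℓ ≤ d ^ 2) :
    LorMin d s A ρ ℓ ≤ LorMin d s B ρ ℓ := by
  have hd0 : (0 : ℕ) < d := (Fact.out : d.Prime).pos
  haveI : NeZero d := ⟨hd0.ne'⟩
  have hbdd : BddBelow {x : ℝ | ∃ S : Finset (ZMod d × ZMod d),
      S.card = ℓ ∧ x = ∑ i ∈ S, trQ d s A ρ i} := by
    refine ⟨0, fun x hx => ?_⟩
    obtain ⟨S, _, rfl⟩ := hx
    exact Finset.sum_nonneg fun i _ => trQ_nonneg d s A hρ i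
  have hcard : ℓ ≤ (Finset.univ : Finset (ZMod d × ZMod d)).card := by
    rw [Finset.card_univ, Fintype.card_prod, ZMod.card, ← pow_two]
    exact hℓ2
  obtain ⟨S₀, _, hS₀⟩ := Finset.exists_subset_card_eq hcard
  have hne : {x : ℝ | ∃ S : Finset (ZMod d × ZMod d),
      S.card = ℓ ∧ x = ∑ i ∈ S, trQ d s B ρ i}.Nonempty :=
    ⟨_, S₀, hS₀, rfl⟩
  refine le_csInf hne ?_
  rintro x ⟨S, hScard, rfl⟩
  calc LorMin d s A ρ ℓ ≤ ∑ i ∈ S, trQ d s A ρ i :=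
        csInf_le hbdd ⟨S, hScard, rfl⟩
    _ ≤ ∑ i ∈ S, trQ d s B ρ i :=
        Finset.sum_le_sum fun i _ => trQ_mono d s hAB hρ i

end
end

section
/- Let A be a finite subset of ZMod d × ZMod d with card A = a ≥ 1, let ρ and σ be density matrices on ℂ^d, and let 0 ≤ p ≤ 1. Define the Lorenz value L(ℓ; τ) = (1/(d·a)) · (minimum over all ℓ-element subsets S of ZMod d × ZMod d of ∑_{i∈S} Tr(τ · Π(A + i))) and the Gini index G(τ) = 1 − (2/(d²+1)) · ∑_{ℓ=1}^{d²} L(ℓ; τ). Then the Gini index is subadditive: G(p·ρ + (1−p)·σ) ≤ p·G(ρ) + (1−p)·G(σ). Moreover, if ρ and σ are comonotonic, i.e. there is an enumeration i_1, …, i_{d²} of ZMod d × ZMod d such that both k ↦ Tr(ρ · Π(A + i_k)) and k ↦ Tr(σ · Π(A + i_k)) are monotone nondecreasing, then equality holds: G(p·ρ + (1−p)·σ) = p·G(ρ) + (1−p)·G(σ). -/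
open scoped Matrix ComplexOrder

noncomputable section

/-- The Gini index `G(τ) = 1 − (2/(d²+1)) · ∑_{ℓ=1}^{d²} L(ℓ; τ)`, where
`L(ℓ; τ) = Λ(ℓ; τ)/(d · card A)` is the Lorenz value. -/
def Gini (d : ℕ) [Fact d.Prime] (s : EuclideanSpace ℂ (ZMod d))
    (A : Finset (ZMod d × ZMod d)) (τ : Matrix (ZMod d) (ZMod d) ℂ) : ℝ :=
  1 - (2 / ((d : ℝ) ^ 2 + 1)) *
    ∑ ℓ ∈ Finset.Icc 1 (d ^ 2), LorMin d s A τ ℓ / (d * A.card)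


section Aux

lemma strictMono_le_apply' {l n : ℕ} {g : Fin l → Fin n} (hg : StrictMono g) :
    ∀ j : Fin l, (j : ℕ) ≤ (g j : ℕ) := by
  suffices H : ∀ m, ∀ j : Fin l, (j : ℕ) = m → m ≤ (g j : ℕ) from fun j => H _ j rfl
  intro m
  induction m with
  | zero => intro j _; exact Nat.zero_le _
  | succ m ih =>
    intro j hj
    have hjlt := j.isLt
    have hm : m < l := by omega
    have h1 : (⟨m, hm⟩ : Fin l) < j := by
      simp only [Fin.lt_def]; omega
    have h2 := hg h1
    have h3 := ih ⟨m, hm⟩ rfl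
    simp only [Fin.lt_def] at h2
    omega

/-- For a function monotone along the enumeration `e`, the sum over the first `l`
indices is minimal among sums over `l`-element subsets. -/
lemma min_sum_of_monotone {n l : ℕ} (h : l ≤ n) {α : Type*} [DecidableEq α]
    (e : Fin n ≃ α) (f : α → ℝ) (hf : Monotone fun k => f (e k))
    (S : Finset α) (hS : S.card = l) :
    ∑ j : Fin l, f (e (Fin.castLE h j)) ≤ ∑ i ∈ S, f i := by
  classical
  set T : Finset (Fin n) := S.map e.symm.toEmbedding with hT
  have hTcard : T.card = l := by rw [hT, Finset.card_map, hS]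
  have hsum : ∑ k ∈ T, f (e k) = ∑ i ∈ S, f i := by
    rw [hT, Finset.sum_map]
    exact Finset.sum_congr rfl fun i _ => by simp
  rw [← hsum]
  have hmono : StrictMono fun j : Fin l => ((T.orderIsoOfFin hTcard j : Fin n)) :=
    fun a b hab => (T.orderIsoOfFin hTcard).strictMono hab
  have hTsum : ∑ k ∈ T, f (e k) = ∑ j : Fin l, f (e (T.orderIsoOfFin hTcard j)) := by
    rw [← Finset.sum_attach T (fun k => f (e k))]
    exact (Fintype.sum_equiv (T.orderIsoOfFin hTcard).toEquiv _ _ (fun j => rfl)).symm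
  rw [hTsum]
  apply Finset.sum_le_sum
  intro j _
  apply hf
  show Fin.castLE h j ≤ (T.orderIsoOfFin hTcard j : Fin n)
  have := strictMono_le_apply' hmono j
  simpa [Fin.le_def] using this

lemma trQ_mix (d : ℕ) [Fact d.Prime] (s : EuclideanSpace ℂ (ZMod d))
    (A : Finset (ZMod d × ZMod d)) (ρ σ : Matrix (ZMod d) (ZMod d) ℂ)
    (p q : ℝ) (i : ZMod d × ZMod d) :
    trQ d s A ((p : ℂ) • ρ + (q : ℂ) • σ) i
      = p * trQ d s A ρ i + q * trQ d s A σ i := by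
  simp only [trQ, Matrix.add_mul, Matrix.smul_mul, Matrix.trace_add, Matrix.trace_smul,
    Complex.add_re, Complex.real_smul, Complex.re_ofReal_mul, smul_eq_mul]

lemma lorMin_spec (d : ℕ) [Fact d.Prime] (s : EuclideanSpace ℂ (ZMod d))
    (A : Finset (ZMod d × ZMod d)) (τ : Matrix (ZMod d) (ZMod d) ℂ) (l : ℕ)
    (hl : l ≤ d ^ 2) :
    (∃ S : Finset (ZMod d × ZMod d), S.card = l ∧
        LorMin d s A τ l = ∑ i ∈ S, trQ d s A τ i) ∧
    (∀ S : Finset (ZMod d × ZMod d), S.card = l →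
        LorMin d s A τ l ≤ ∑ i ∈ S, trQ d s A τ i) := by
  classical
  haveI : NeZero d := ⟨(Fact.out : d.Prime).ne_zero⟩
  have hcard : Fintype.card (ZMod d × ZMod d) = d ^ 2 := by
    simp [ZMod.card, sq]
  set E := {x : ℝ | ∃ S : Finset (ZMod d × ZMod d), S.card = l ∧ x = ∑ i ∈ S, trQ d s A τ i}
    with hE
  have hfin : E.Finite := by
    apply Set.Finite.subset (Set.finite_range fun S : Finset (ZMod d × ZMod d) =>
      ∑ i ∈ S, trQ d s A τ i)
    rintro x ⟨S, _, rfl⟩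
    exact ⟨S, rfl⟩
  have hne : E.Nonempty := by
    obtain ⟨S, _, hScard⟩ := Finset.exists_subset_card_eq
      (show l ≤ (Finset.univ : Finset (ZMod d × ZMod d)).card by
        rw [Finset.card_univ, hcard]; exact hl)
    exact ⟨_, S, hScard, rfl⟩
  constructor
  · obtain ⟨S, hS, hx⟩ := hne.csInf_mem hfin
    exact ⟨S, hS, hx⟩
  · intro S hS
    exact csInf_le hfin.bddBelow ⟨S, hS, rfl⟩

lemma lorMin_eq_of_monotone (d : ℕ) [Fact d.Prime] (s : EuclideanSpace ℂ (ZMod d))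
    (A : Finset (ZMod d × ZMod d)) (τ : Matrix (ZMod d) (ZMod d) ℂ) (l : ℕ)
    (hl : l ≤ d ^ 2) (e : Fin (d ^ 2) ≃ (ZMod d × ZMod d))
    (hmono : Monotone fun k : Fin (d ^ 2) => trQ d s A τ (e k)) :
    LorMin d s A τ l = ∑ j : Fin l, trQ d s A τ (e (Fin.castLE hl j)) := by
  classical
  obtain ⟨⟨S, hS, hval⟩, hle⟩ := lorMin_spec d s A τ l hl
  apply le_antisymm
  · set S₀ : Finset (ZMod d × ZMod d) :=
      Finset.univ.map ((Fin.castLEEmb hl).trans e.toEmbedding) with hS₀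
    have hS₀card : S₀.card = l := by simp [hS₀]
    have := hle S₀ hS₀card
    rwa [hS₀, Finset.sum_map] at this
  · rw [hval]
    exact min_sum_of_monotone hl e _ hmono S hS

end Aux

/-- The Gini index is subadditive:
`G(p·ρ + (1−p)·σ) ≤ p·G(ρ) + (1−p)·G(σ)`; moreover if `ρ` and `σ` are comonotonic
(there is an enumeration of `ZMod d × ZMod d` along which both `Q` functions are monotone
nondecreasing), then equality holds. -/
theorem gini_subadditive_and_additive_of_comonotonic
    (d a : ℕ) [Fact d.Prime] (hodd : Odd d)
    (s : EuclideanSpace ℂ (ZMod d))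
    (A : Finset (ZMod d × ZMod d)) (hA : A.card = a) (ha : 1 ≤ a)
    (ρ σ : Matrix (ZMod d) (ZMod d) ℂ)
    (hρ : ρ.PosSemidef) (hρtr : ρ.trace = 1)
    (hσ : σ.PosSemidef) (hσtr : σ.trace = 1)
    (p : ℝ) (hp0 : 0 ≤ p) (hp1 : p ≤ 1) :
    (Gini d s A ((p : ℂ) • ρ + ((1 - p : ℝ) : ℂ) • σ)
        ≤ p * Gini d s A ρ + (1 - p) * Gini d s A σ) ∧
    ((∃ e : Fin (d ^ 2) ≃ (ZMod d × ZMod d),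
        Monotone (fun k : Fin (d ^ 2) => trQ d s A ρ (e k)) ∧
        Monotone (fun k : Fin (d ^ 2) => trQ d s A σ (e k))) →
      Gini d s A ((p : ℂ) • ρ + ((1 - p : ℝ) : ℂ) • σ)
        = p * Gini d s A ρ + (1 - p) * Gini d s A σ) := by
    classical
  have hd2 : 2 ≤ d := (Fact.out : d.Prime).two_le
  -- positivity facts
  have hq0 : (0 : ℝ) ≤ 1 - p := by linarith
  have hD : (0 : ℝ) < (d : ℝ) * A.card := by
    have : (0:ℝ) < (d:ℝ) := by positivity
    have ha' : (0:ℝ) < (A.card : ℝ) := by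
      rw [hA]; exact_mod_cast ha
    positivity
  have hc : (0 : ℝ) ≤ 2 / ((d : ℝ) ^ 2 + 1) := by positivity
  set τ := ((p : ℂ) • ρ + ((1 - p : ℝ) : ℂ) • σ) with hτ
  -- superadditivity of LorMin
  have hsup : ∀ l ∈ Finset.Icc 1 (d ^ 2),
      p * LorMin d s A ρ l + (1 - p) * LorMin d s A σ l ≤ LorMin d s A τ l := by
    intro l hlmem
    have hl : l ≤ d ^ 2 := (Finset.mem_Icc.mp hlmem).2
    obtain ⟨⟨S, hS, hval⟩, _⟩ := lorMin_spec d s A τ l hl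
    obtain ⟨_, hleρ⟩ := lorMin_spec d s A ρ l hl
    obtain ⟨_, hleσ⟩ := lorMin_spec d s A σ l hl
    rw [hval]
    have hsplit : ∑ i ∈ S, trQ d s A τ i
        = p * ∑ i ∈ S, trQ d s A ρ i + (1 - p) * ∑ i ∈ S, trQ d s A σ i := by
      rw [Finset.mul_sum, Finset.mul_sum, ← Finset.sum_add_distrib]
      exact Finset.sum_congr rfl fun i _ => trQ_mix d s A ρ σ p (1 - p) i
    rw [hsplit]
    have h1 := hleρ S hS
    have h2 := hleσ S hS
    nlinarith
  -- first part: the inequality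
  have hineq : Gini d s A τ ≤ p * Gini d s A ρ + (1 - p) * Gini d s A σ := by
    have hsum : ∑ l ∈ Finset.Icc 1 (d ^ 2),
        (p * LorMin d s A ρ l + (1 - p) * LorMin d s A σ l) / ((d : ℝ) * A.card)
        ≤ ∑ l ∈ Finset.Icc 1 (d ^ 2), LorMin d s A τ l / ((d : ℝ) * A.card) := by
      apply Finset.sum_le_sum
      intro l hl
      exact div_le_div_of_nonneg_right (hsup l hl) hD.le
    simp only [Gini]
    have hexp : ∑ l ∈ Finset.Icc 1 (d ^ 2),
        (p * LorMin d s A ρ l + (1 - p) * LorMin d s A σ l) / ((d : ℝ) * A.card)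
        = p * ∑ l ∈ Finset.Icc 1 (d ^ 2), LorMin d s A ρ l / ((d : ℝ) * A.card)
          + (1 - p) * ∑ l ∈ Finset.Icc 1 (d ^ 2), LorMin d s A σ l / ((d : ℝ) * A.card) := by
      rw [Finset.mul_sum, Finset.mul_sum, ← Finset.sum_add_distrib]
      exact Finset.sum_congr rfl fun l _ => by ring
    rw [hexp] at hsum
    nlinarith [mul_le_mul_of_nonneg_left hsum hc]
  refine ⟨hineq, ?_⟩
  -- second part: equality under comonotonicity
  rintro ⟨e, heρ, heσ⟩
  have heτ : Monotone fun k : Fin (d ^ 2) => trQ d s A τ (e k) := by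
    have : (fun k : Fin (d ^ 2) => trQ d s A τ (e k))
        = fun k => p * trQ d s A ρ (e k) + (1 - p) * trQ d s A σ (e k) := by
      funext k; exact trQ_mix d s A ρ σ p (1 - p) (e k)
    rw [this]
    exact (heρ.const_mul hp0).add (heσ.const_mul hq0)
  have hLor : ∀ l ∈ Finset.Icc 1 (d ^ 2),
      LorMin d s A τ l = p * LorMin d s A ρ l + (1 - p) * LorMin d s A σ l := by
    intro l hlmem
    have hl : l ≤ d ^ 2 := (Finset.mem_Icc.mp hlmem).2
    rw [lorMin_eq_of_monotone d s A τ l hl e heτ,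
      lorMin_eq_of_monotone d s A ρ l hl e heρ,
      lorMin_eq_of_monotone d s A σ l hl e heσ,
      Finset.mul_sum, Finset.mul_sum, ← Finset.sum_add_distrib]
    exact Finset.sum_congr rfl fun j _ => trQ_mix d s A ρ σ p (1 - p) (e (Fin.castLE hl j))
  simp only [Gini]
  rw [Finset.sum_congr rfl fun l hl => by rw [hLor l hl]]
  have : ∑ l ∈ Finset.Icc 1 (d ^ 2),
      (p * LorMin d s A ρ l + (1 - p) * LorMin d s A σ l) / ((d : ℝ) * A.card)
      = p * ∑ l ∈ Finset.Icc 1 (d ^ 2), LorMin d s A ρ l / ((d : ℝ) * A.card)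
        + (1 - p) * ∑ l ∈ Finset.Icc 1 (d ^ 2), LorMin d s A σ l / ((d : ℝ) * A.card) := by
    rw [Finset.mul_sum, Finset.mul_sum, ← Finset.sum_add_distrib]
    exact Finset.sum_congr rfl fun l _ => by ring
  rw [this]
  ring

end
end

section
/- Let A ⊆ B be finite subsets of ZMod d × ZMod d with card A = a ≥ 1 and card B = b (so the covering by the equivalence class of A is finer than that of B), and let ρ be a density matrix on ℂ^d. With the Lorenz values L_A(ℓ; ρ) = (1/(d·a)) · (minimum over all ℓ-element subsets S of ZMod d × ZMod d of ∑_{i∈S} Tr(ρ · Π(A + i))), similarly L_B, and the Gini indices G_A(ρ) = 1 − (2/(d²+1)) · ∑_{ℓ=1}^{d²} L_A(ℓ; ρ) and G_B(ρ) = 1 − (2/(d²+1)) · ∑_{ℓ=1}^{d²} L_B(ℓ; ρ), the complementary Gini indices satisfy a · (1 − G_A(ρ)) ≤ b · (1 − G_B(ρ)). -/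
open scoped Matrix ComplexOrder

noncomputable section

section AuxLemmas

open scoped Matrix ComplexOrder

lemma trace_mul_psd_nonneg {n : Type*} [Fintype n] [DecidableEq n] {ρ M : Matrix n n ℂ}
    (hρ : ρ.PosSemidef) (hM : M.PosSemidef) : 0 ≤ (ρ * M).trace := by
  letI : PartialOrder (Matrix n n ℂ) := Matrix.instPartialOrder
  haveI : NonnegSpectrumClass ℝ (Matrix n n ℂ) := Matrix.instNonnegSpectrumClass
  obtain ⟨B, hB, -, hBρ⟩ := CFC.exists_sqrt_of_isSelfAdjoint_of_quasispectrumRestricts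
    hρ.isHermitian (QuasispectrumRestricts.nnreal_of_nonneg hρ.nonneg)
  subst hBρ
  rw [Matrix.mul_assoc, Matrix.trace_mul_comm]
  have h := hM.mul_mul_conjTranspose_same B
  rw [show Bᴴ = B from hB.star_eq] at h
  exact h.trace_nonneg

variable {ι : Type*} [Fintype ι] [DecidableEq ι]

local notation "E'" => EuclideanSpace ℂ ι

lemma psd_of_lin (T : E' →ₗ[ℂ] E') (hsym : T.IsSymmetric)
    (hpos : ∀ x : E', (0:ℂ) ≤ inner ℂ x (T x)) :
    (Matrix.toEuclideanLin.symm T : Matrix ι ι ℂ).PosSemidef := by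
  rw [← Matrix.isPositive_toEuclideanLin_iff, LinearEquiv.apply_symm_apply]
  refine ⟨hsym, fun x => ?_⟩
  rw [hsym x x]
  simpa using (Complex.le_def.mp (hpos x)).1

omit [DecidableEq ι] in
lemma proj_isSymmetric (K : Submodule ℂ E') :
    (K.subtype ∘ₗ (Submodule.orthogonalProjectionOnto K).toLinearMap).IsSymmetric := by
  intro x y
  simp only [LinearMap.comp_apply, ContinuousLinearMap.coe_coe, Submodule.subtype_apply]
  exact Submodule.inner_starProjection_left_eq_right K x y

omit [DecidableEq ι] in
lemma inner_proj (K : Submodule ℂ E') (x : E') :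
    (inner ℂ x ((K.subtype ∘ₗ (Submodule.orthogonalProjectionOnto K).toLinearMap) x) : ℂ)
      = (‖(Submodule.orthogonalProjectionOnto K x : E')‖ : ℂ) ^ 2 := by
  have hx : x = (Submodule.orthogonalProjectionOnto K x : E') + (x - Submodule.orthogonalProjectionOnto K x) := by abel
  calc (inner ℂ x ((Submodule.orthogonalProjectionOnto K x : E')) : ℂ)
      = inner ℂ ((Submodule.orthogonalProjectionOnto K x : E') + (x - Submodule.orthogonalProjectionOnto K x))
          ((Submodule.orthogonalProjectionOnto K x : E')) := by rw [← hx]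
    _ = inner ℂ ((Submodule.orthogonalProjectionOnto K x : E')) ((Submodule.orthogonalProjectionOnto K x : E'))
        + inner ℂ (x - (Submodule.orthogonalProjectionOnto K x : E')) ((Submodule.orthogonalProjectionOnto K x : E')) := by
        rw [inner_add_left]
    _ = (‖(Submodule.orthogonalProjectionOnto K x : E')‖ : ℂ) ^ 2 := by
        rw [Submodule.inner_left_of_mem_orthogonal (Submodule.coe_mem _)
          (show x - (Submodule.orthogonalProjectionOnto K x : E') ∈ Kᗮ from
            Submodule.sub_starProjection_mem_orthogonal (K := K) x), add_zero, inner_self_eq_norm_sq_to_K]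
        norm_num

omit [DecidableEq ι] in
lemma norm_proj_mono {K L : Submodule ℂ E'} (hKL : K ≤ L) (x : E') :
    ‖(Submodule.orthogonalProjectionOnto K x : E')‖ ≤ ‖(Submodule.orthogonalProjectionOnto L x : E')‖ := by
  have h0 : Submodule.orthogonalProjectionOnto K (x - (Submodule.orthogonalProjectionOnto L x : E')) = 0 :=
    Submodule.orthogonalProjectionOnto_apply_of_mem_orthogonal (K := K)
      (Submodule.orthogonal_le hKL (show x - (Submodule.orthogonalProjectionOnto L x : E') ∈ Lᗮ from
        Submodule.sub_starProjection_mem_orthogonal (K := L) x))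
  have heq : Submodule.orthogonalProjectionOnto K x
      = Submodule.orthogonalProjectionOnto K (Submodule.orthogonalProjectionOnto L x : E') := by
    have h := map_sub (Submodule.orthogonalProjectionOnto K) x (Submodule.orthogonalProjectionOnto L x : E')
    rw [h0] at h
    exact sub_eq_zero.mp h.symm
  rw [heq]
  calc ‖(Submodule.orthogonalProjectionOnto K (Submodule.orthogonalProjectionOnto L x : E') : E')‖
      ≤ ‖Submodule.orthogonalProjectionOnto K‖ * ‖(Submodule.orthogonalProjectionOnto L x : E')‖ :=
        (Submodule.orthogonalProjectionOnto K).le_opNorm _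
    _ ≤ 1 * ‖(Submodule.orthogonalProjectionOnto L x : E')‖ :=
        mul_le_mul_of_nonneg_right (Submodule.orthogonalProjectionOnto_norm_le K) (norm_nonneg _)
    _ = ‖(Submodule.orthogonalProjectionOnto L x : E')‖ := one_mul _

end AuxLemmas


lemma pmat_psd (d : ℕ) [Fact d.Prime] (s : EuclideanSpace ℂ (ZMod d))
    (A : Finset (ZMod d × ZMod d)) : (PmatM d s A).PosSemidef := by
  rw [PmatM]
  apply psd_of_lin
  · exact proj_isSymmetric _
  · intro x
    rw [Proj, inner_proj, ← Complex.ofReal_pow, ← Complex.ofReal_zero, Complex.real_le_real]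
    positivity

lemma pmat_diff_psd (d : ℕ) [Fact d.Prime] (s : EuclideanSpace ℂ (ZMod d))
    {A B : Finset (ZMod d × ZMod d)} (hAB : A ⊆ B) :
    (PmatM d s B - PmatM d s A).PosSemidef := by
  have hsub : Hsub d s A ≤ Hsub d s B :=
    Submodule.span_mono (Set.image_mono (Finset.coe_subset.mpr hAB))
  have hdiff : PmatM d s B - PmatM d s A
      = Matrix.toEuclideanLin.symm (Proj d s B - Proj d s A) := by
    rw [map_sub]; rfl
  rw [hdiff]
  apply psd_of_lin
  · exact (proj_isSymmetric _).sub (proj_isSymmetric _)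
  · intro x
    rw [LinearMap.sub_apply, inner_sub_right, Proj, Proj, inner_proj, inner_proj,
      ← Complex.ofReal_pow, ← Complex.ofReal_pow, ← Complex.ofReal_sub]
    rw [← Complex.ofReal_zero, Complex.real_le_real]
    have h := norm_proj_mono hsub x
    have h2 := pow_le_pow_left₀ (norm_nonneg _) h 2
    linarith

lemma lormin_mono (d : ℕ) [Fact d.Prime] (s : EuclideanSpace ℂ (ZMod d))
    {A B : Finset (ZMod d × ZMod d)} (hAB : A ⊆ B) {ρ : Matrix (ZMod d) (ZMod d) ℂ}
    (hρ : ρ.PosSemidef) {ℓ : ℕ} (hℓ : ℓ ≤ d ^ 2) :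
    LorMin d s A ρ ℓ ≤ LorMin d s B ρ ℓ := by
  haveI : NeZero d := ⟨(Fact.out : d.Prime).ne_zero⟩
  have hbdd : BddBelow {x : ℝ | ∃ S : Finset (ZMod d × ZMod d),
      S.card = ℓ ∧ x = ∑ i ∈ S, trQ d s A ρ i} := by
    refine ⟨0, ?_⟩
    rintro x ⟨S, hS, rfl⟩
    exact Finset.sum_nonneg fun i _ => trQ_nonneg d s A hρ i
  rw [LorMin, LorMin]
  apply le_csInf
  · obtain ⟨S, _, hS⟩ := Finset.exists_subset_card_eq
      (s := (Finset.univ : Finset (ZMod d × ZMod d))) (n := ℓ)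
      (by rw [Finset.card_univ]; simpa [Fintype.card_prod, ZMod.card, pow_two] using hℓ)
    exact ⟨_, S, hS, rfl⟩
  · rintro x ⟨S, hS, rfl⟩
    refine le_trans (csInf_le hbdd ⟨S, hS, rfl⟩) ?_
    exact Finset.sum_le_sum fun i _ => trQ_mono d s hAB hρ i

/-- If `A ⊆ B` with `card A = a ≥ 1` and `card B = b` (the covering by the
class of `A` is finer than that of `B`), then the complementary Gini indices of a density
matrix `ρ` satisfy `a · (1 − G_A(ρ)) ≤ b · (1 − G_B(ρ))`. -/
theorem complementary_gini_mono_of_finer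
    (d a b : ℕ) [Fact d.Prime] (hodd : Odd d)
    (s : EuclideanSpace ℂ (ZMod d))
    (A B : Finset (ZMod d × ZMod d)) (hAB : A ⊆ B)
    (hA : A.card = a) (ha : 1 ≤ a) (hB : B.card = b)
    (ρ : Matrix (ZMod d) (ZMod d) ℂ) (hρ : ρ.PosSemidef) (hρtr : ρ.trace = 1) :
    (a : ℝ) * (1 - Gini d s A ρ) ≤ (b : ℝ) * (1 - Gini d s B ρ) := by
  haveI : NeZero d := ⟨(Fact.out : d.Prime).ne_zero⟩
  have hd0 : (0:ℝ) < d := by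
    exact_mod_cast Nat.pos_of_ne_zero (Fact.out : d.Prime).ne_zero
  have ha0 : (a:ℝ) ≠ 0 := Nat.cast_ne_zero.mpr (by omega)
  have hb1 : 1 ≤ b := le_trans ha (hA ▸ hB ▸ Finset.card_le_card hAB)
  have hb0 : (b:ℝ) ≠ 0 := Nat.cast_ne_zero.mpr (by omega)
  have e1 : ∀ (C : Finset (ZMod d × ZMod d)) (c : ℕ), C.card = c → (c:ℝ) ≠ 0 →
      (c : ℝ) * (1 - Gini d s C ρ)
        = (2 / ((d : ℝ) ^ 2 + 1)) * ∑ ℓ ∈ Finset.Icc 1 (d ^ 2), LorMin d s C ρ ℓ / d := by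
    intro C c hC hc
    rw [Gini, hC, sub_sub_cancel, ← mul_assoc, mul_comm (c:ℝ), mul_assoc]
    congr 1
    rw [Finset.mul_sum]
    refine Finset.sum_congr rfl fun ℓ _ => ?_
    field_simp
  rw [e1 A a hA ha0, e1 B b hB hb0]
  have hc : (0:ℝ) ≤ 2 / ((d : ℝ) ^ 2 + 1) := by positivity
  refine mul_le_mul_of_nonneg_left (Finset.sum_le_sum fun ℓ hℓ => ?_) hc
  have hℓ2 : ℓ ≤ d ^ 2 := (Finset.mem_Icc.mp hℓ).2
  exact div_le_div_of_nonneg_right (lormin_mono d s hAB hρ hℓ2) hd0.le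


end
end
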